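/- Let p, q be natural numbers, A ∈ ℝ^{(p+q)×(p+q)} positive semidefinite with blocks A₁₁ ∈ ℝ^{p×p}, A₁₂ ∈ ℝ^{p×q}, A₂₁ = A₁₂ᵀ, A₂₂ ∈ ℝ^{q×q}, and C ∈ ℝ^{q×q} positive semidefinite. Let T : ℝ^{p+q} × ℝ^q → ℝ^{p+q} be the linear map T((x₁, x₂), z) = (x₁, x₂ + z), where x₁ ∈ ℝ^p, x₂ ∈ ℝ^q. Then the pushforward of the product measure N(0, A) ⊗ N(0, C) under T equals N(0, B), where B ∈ ℝ^{(p+q)×(p+q)} has blocks B₁₁ = A₁₁, B₁₂ = A₁₂, B₂₁ = A₂₁, B₂₂ = A₂₂ + C. (Finite-dimensional form of Proposition 1: if f_s ~ GP(0, k_s) and f_t | f_s ~ GP(f_s, k_t), then at any finite collection of source points and target points the joint law of (f_s at the source points, f_t at the target points) is Gaussian with the hierarchical covariance in which the target block receives the additive term k_t.) -/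

import Mathlib

open MeasureTheory ProbabilityTheory Matrix

open Classical in
/-- A measurable square root of a positive semidefinite real matrix
(junk value `0` if the matrix is not positive semidefinite). -/
noncomputable def matSqrt {ι : Type*} [Fintype ι] [DecidableEq ι]
    (S : Matrix ι ι ℝ) : Matrix ι ι ℝ :=
  if h : S.PosSemidef then
    h.1.eigenvectorUnitary.1 * diagonal ((↑) ∘ (√·) ∘ h.1.eigenvalues) *
      (star h.1.eigenvectorUnitary : Matrix ι ι ℝ)
  else 0

/-- The standard Gaussian measure `N(0, I)` on `ι → ℝ`. -/
noncomputable def stdGaussian (ι : Type*) [Fintype ι] : Measure (ι → ℝ) :=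
  Measure.pi fun _ => gaussianReal 0 1

/-- The multivariate Gaussian measure `N(μ, S)` on `ι → ℝ`, for `S` positive
semidefinite, realized as the pushforward of the standard Gaussian under the
affine map `x ↦ μ + √S x`. -/
noncomputable def multiGaussian {ι : Type*} [Fintype ι] [DecidableEq ι]
    (μ : ι → ℝ) (S : Matrix ι ι ℝ) : Measure (ι → ℝ) :=
  (stdGaussian ι).map fun x => μ + (matSqrt S).mulVec x

/-!
The map `T` factors as addition after `id × K`, where `K z = (0, z)` is the matrix
`fromRows 0 1`. A centred Gaussian pushes forward under a matrix `K` to the centred Gaussian with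
covariance `K C Kᵀ`, here `fromBlocks 0 0 0 C`, and independent centred Gaussians add to the
centred Gaussian with the sum of the covariances. Both facts are read off characteristic
functions after identifying `multiGaussian 0 S` with Mathlib's `multivariateGaussian 0 S` on
`EuclideanSpace ℝ ι`: the image of the standard Gaussian under `M` has characteristic function
`t ↦ exp (-(t ⬝ᵥ (M * Mᵀ) *ᵥ t) / 2)`, so it depends on `M` only through `M * Mᵀ`.
-/

open WithLp Complex
open scoped RealInnerProductSpace MatrixOrder

variable {ι κ : Type*} [Fintype ι] [Fintype κ]

lemma matSqrt_eq_sqrt [DecidableEq ι] {S : Matrix ι ι ℝ} (hS : S.PosSemidef) :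
    matSqrt S = CFC.sqrt S := by
  rw [matSqrt, dif_pos hS, CFC.sqrt_eq_real_sqrt S hS.nonneg, cfcₙ_eq_cfc, hS.1.cfc_eq]
  rfl

lemma matSqrt_mul_transpose [DecidableEq ι] {S : Matrix ι ι ℝ} (hS : S.PosSemidef) :
    matSqrt S * (matSqrt S)ᵀ = S := by
  rw [matSqrt_eq_sqrt hS, ← conjTranspose_eq_transpose_of_trivial, ← star_eq_conjTranspose,
    (CFC.sqrt_nonneg S).isSelfAdjoint.star_eq, CFC.sqrt_mul_sqrt_self S hS.nonneg]

lemma Matrix.PosSemidef.mul_mul_transpose_same {S : Matrix ι ι ℝ} (hS : S.PosSemidef)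
    (K : Matrix κ ι ℝ) : (K * S * Kᵀ).PosSemidef := by
  simpa using hS.mul_mul_conjTranspose_same K

instance : IsProbabilityMeasure (stdGaussian ι) := by
  unfold _root_.stdGaussian
  infer_instance

instance [DecidableEq ι] (μ : ι → ℝ) (S : Matrix ι ι ℝ) :
    IsProbabilityMeasure (multiGaussian μ S) :=
  Measure.isProbabilityMeasure_map (by fun_prop)

lemma multiGaussian_zero [DecidableEq ι] (S : Matrix ι ι ℝ) :
    multiGaussian 0 S = (stdGaussian ι).map (matSqrt S).mulVec := by
  simp only [multiGaussian, zero_add]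

lemma charFun_map_toLp_stdGaussian (u : EuclideanSpace ℝ κ) :
    charFun ((stdGaussian κ).map (toLp 2)) u = exp (-(‖u‖ ^ 2 / 2) : ℝ) := by
  rw [_root_.stdGaussian, map_pi_eq_stdGaussian, charFun_stdGaussian]
  push_cast
  ring_nf

lemma charFun_map_toLp_mulVec_stdGaussian (M : Matrix ι κ ℝ) (t : EuclideanSpace ℝ ι) :
    charFun ((stdGaussian κ).map (toLp 2 ∘ M.mulVec)) t
      = exp (-(ofLp t ⬝ᵥ (M * Mᵀ) *ᵥ ofLp t / 2) : ℝ) := by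
  have hinner (x : κ → ℝ) : ⟪toLp 2 (M *ᵥ x), t⟫ = ⟪toLp 2 x, toLp 2 (Mᵀ *ᵥ ofLp t)⟫ := by
    simp only [EuclideanSpace.inner_eq_star_dotProduct, star_trivial]
    rw [mulVec_transpose, ← dotProduct_mulVec, dotProduct_comm]
  have hnorm : ‖toLp 2 (Mᵀ *ᵥ ofLp t)‖ ^ 2 = ofLp t ⬝ᵥ (M * Mᵀ) *ᵥ ofLp t := by
    rw [← real_inner_self_eq_norm_sq, EuclideanSpace.inner_eq_star_dotProduct, star_trivial,
      ofLp_toLp, ← mulVec_mulVec, mulVec_transpose, ← dotProduct_mulVec]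
  rw [← hnorm, ← charFun_map_toLp_stdGaussian, charFun_apply, charFun_apply,
    integral_map (by fun_prop) (by fun_prop), integral_map (by fun_prop) (by fun_prop)]
  simp_rw [Function.comp_apply, hinner]

lemma map_toLp_mulVec_stdGaussian [DecidableEq ι] (M : Matrix ι κ ℝ) :
    (stdGaussian κ).map (toLp 2 ∘ M.mulVec) = multivariateGaussian 0 (M * Mᵀ) := by
  have : IsProbabilityMeasure ((stdGaussian κ).map (toLp 2 ∘ M.mulVec)) :=
    Measure.isProbabilityMeasure_map (by fun_prop)
  refine Measure.ext_of_charFun (funext fun t => ?_)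
  rw [charFun_map_toLp_mulVec_stdGaussian, charFun_multivariateGaussian]
  · simp
  · simpa using posSemidef_self_mul_conjTranspose M

lemma map_mulVec_stdGaussian [DecidableEq ι] (M : Matrix ι κ ℝ) :
    (stdGaussian κ).map M.mulVec = (multivariateGaussian 0 (M * Mᵀ)).map ofLp := by
  rw [← map_toLp_mulVec_stdGaussian, Measure.map_map (by fun_prop) (by fun_prop)]
  rfl

lemma multiGaussian_zero_eq_map_ofLp [DecidableEq ι] {S : Matrix ι ι ℝ} (hS : S.PosSemidef) :
    multiGaussian 0 S = (multivariateGaussian 0 S).map ofLp := by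
  rw [multiGaussian_zero, map_mulVec_stdGaussian, matSqrt_mul_transpose hS]

lemma map_mulVec_multiGaussian [DecidableEq ι] [DecidableEq κ] {S : Matrix ι ι ℝ}
    (hS : S.PosSemidef) (K : Matrix κ ι ℝ) :
    (multiGaussian 0 S).map K.mulVec = multiGaussian 0 (K * S * Kᵀ) := by
  have hKS : (K * matSqrt S) * (K * matSqrt S)ᵀ = K * S * Kᵀ := by
    rw [transpose_mul, Matrix.mul_assoc, ← Matrix.mul_assoc (matSqrt S), matSqrt_mul_transpose hS,
      Matrix.mul_assoc]
  rw [multiGaussian_zero, Measure.map_map (by fun_prop) (by fun_prop),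
    multiGaussian_zero_eq_map_ofLp (hS.mul_mul_transpose_same K), ← hKS,
    ← map_mulVec_stdGaussian]
  congr 1
  funext x
  exact mulVec_mulVec x K (matSqrt S)

lemma multivariateGaussian_conv [DecidableEq ι] {μ ν : EuclideanSpace ℝ ι} {S T : Matrix ι ι ℝ}
    (hS : S.PosSemidef) (hT : T.PosSemidef) :
    multivariateGaussian μ S ∗ multivariateGaussian ν T = multivariateGaussian (μ + ν) (S + T) := by
  refine Measure.ext_of_charFun (funext fun t => ?_)
  rw [charFun_conv, charFun_multivariateGaussian hS, charFun_multivariateGaussian hT,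
    charFun_multivariateGaussian (hS.add hT), ← Complex.exp_add, inner_add_right, add_mulVec,
    dotProduct_add]
  push_cast
  ring_nf

lemma multiGaussian_conv [DecidableEq ι] {S T : Matrix ι ι ℝ} (hS : S.PosSemidef)
    (hT : T.PosSemidef) : multiGaussian 0 S ∗ multiGaussian 0 T = multiGaussian 0 (S + T) := by
  have hconv := multivariateGaussian_conv (μ := 0) (ν := 0) hS hT
  rw [add_zero] at hconv
  rw [multiGaussian_zero_eq_map_ofLp hS, multiGaussian_zero_eq_map_ofLp hT,
    multiGaussian_zero_eq_map_ofLp (hS.add hT), ← hconv]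
  exact (Measure.map_conv_addMonoidHom (WithLp.linearEquiv 2 ℝ (ι → ℝ)).toAddMonoidHom
    (WithLp.measurable_ofLp 2 (ι → ℝ))).symm

/-- **Finite-dimensional form of Proposition 1.** Identify `ℝ^{p+q}` with
`(Fin p ⊕ Fin q) → ℝ` (first block: the `p` source points, second block: the
`q` target points). If `(x₁, x₂) ~ N(0, A)` jointly with `A` positive
semidefinite, and independently `z ~ N(0, C)` with `C` positive semidefinite,
then the image of the pair under `T((x₁, x₂), z) = (x₁, x₂ + z)` is `N(0, B)`
where `B₁₁ = A₁₁`, `B₁₂ = A₁₂`, `B₂₁ = A₂₁` and `B₂₂ = A₂₂ + C`, i.e.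
`B = A + fromBlocks 0 0 0 C`. -/
theorem hierarchical_joint_gaussian (p q : ℕ)
    (A : Matrix (Fin p ⊕ Fin q) (Fin p ⊕ Fin q) ℝ) (hA : A.PosSemidef)
    (C : Matrix (Fin q) (Fin q) ℝ) (hC : C.PosSemidef) :
    ((multiGaussian 0 A).prod (multiGaussian 0 C)).map
        (fun w : ((Fin p ⊕ Fin q) → ℝ) × (Fin q → ℝ) =>
          w.1 + Sum.elim (0 : Fin p → ℝ) w.2)
      = multiGaussian 0 (A + Matrix.fromBlocks 0 0 0 C) := by
  set K : Matrix (Fin p ⊕ Fin q) (Fin q) ℝ := fromRows 0 1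
  have hT : (fun w : ((Fin p ⊕ Fin q) → ℝ) × (Fin q → ℝ) => w.1 + Sum.elim (0 : Fin p → ℝ) w.2)
      = (fun w => w.1 + w.2) ∘ Prod.map id K.mulVec := by
    funext w
    simp [K, fromRows_mulVec]
  have hKCK : K * C * Kᵀ = fromBlocks 0 0 0 C := by
    simp [K, transpose_fromRows, ← fromCols_fromRows_eq_fromBlocks]
  rw [hT, ← Measure.map_map (by fun_prop) (by fun_prop),
    ← Measure.map_prod_map _ _ measurable_id (by fun_prop), Measure.map_id,
    map_mulVec_multiGaussian hC, ← hKCK]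
  exact multiGaussian_conv hA (hC.mul_mul_transpose_same K)
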